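/- The function ψ₁(t) = (1/2)·t·v_⋆'(t), with v_⋆(t) = tanh(t/√2), satisfies the inhomogeneous linearized Allen–Cahn equation ψ₁''(t) + (1 − 3 v_⋆(t)²) ψ₁(t) = v_⋆''(t) for every t ∈ ℝ. Moreover ψ₁ is odd, so ∫_ℝ ψ₁(t) v_⋆'(t) dt = 0. -/

import Mathlib

open MeasureTheory

/-!
Write `v` for the heteroclinic. It solves the first-order equation `v' = (1 - v²)/√2`, hence the
autonomous equation `v'' = f(v)` with `f(x) = x³ - x`. Differentiating `v'' = f(v)` once more gives
`v''' = f'(v) v'`, so for `ψ₁ = ½ t v'` one gets `ψ₁'' = v'' + ½ t v''' = v'' + f'(v) ψ₁`, which is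
the linearized equation since `f'(v) = 3v² - 1`. (Equivalently, `ψ₁` is half the derivative at
`λ = 1` of the rescaled profiles `v(λ t)`.) As `v` is odd, `v'` is even and `ψ₁ v'` is odd.
-/

theorem Real.hasDerivAt_tanh (x : ℝ) : HasDerivAt Real.tanh (1 - Real.tanh x ^ 2) x := by
  have hcosh : Real.cosh x ≠ 0 := (Real.cosh_pos x).ne'
  have hquot := (Real.hasDerivAt_sinh x).div (Real.hasDerivAt_cosh x) hcosh
  rw [show Real.tanh = fun y => Real.sinh y / Real.cosh y from
    funext Real.tanh_eq_sinh_div_cosh]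
  refine hquot.congr_deriv ?_
  field_simp

theorem Function.Odd.integral_eq_zero {G E : Type*} [MeasurableSpace G] [AddGroup G]
    [MeasurableNeg G] [NormedAddCommGroup E] [NormedSpace ℝ E] {μ : Measure G}
    [μ.IsNegInvariant] {f : G → E} (hf : f.Odd) : ∫ x, f x ∂μ = 0 := by
  have hneg : ∫ x, f x ∂μ = -∫ x, f x ∂μ :=
    calc ∫ x, f x ∂μ = ∫ x, f (-x) ∂μ := (integral_neg_eq_self f μ).symm
      _ = ∫ x, -f x ∂μ := by simp only [hf.eq]
      _ = -∫ x, f x ∂μ := integral_neg f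
  have htwice : (2 : ℝ) • ∫ x, f x ∂μ = 0 := by
    rw [two_smul]
    nth_rw 1 [hneg]
    exact neg_add_cancel _
  simpa using htwice

theorem hasDerivAt_tanh_div_sqrt_two (t : ℝ) :
    HasDerivAt (fun s => Real.tanh (s / √2)) ((1 - Real.tanh (t / √2) ^ 2) / √2) t := by
  simpa [Function.comp_def, div_eq_mul_inv, mul_comm] using
    (Real.hasDerivAt_tanh (t / √2)).comp t ((hasDerivAt_id t).div_const √2)

theorem hasDerivAt_deriv_of_hasDerivAt_eq_one_sub_sq_div_sqrt_two {v : ℝ → ℝ}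
    (hv : ∀ t, HasDerivAt v ((1 - v t ^ 2) / √2) t) (t : ℝ) :
    HasDerivAt (deriv v) (v t ^ 3 - v t) t := by
  have hderiv : deriv v = fun s => (1 - v s ^ 2) / √2 := funext fun s => (hv s).deriv
  rw [hderiv]
  refine (((hasDerivAt_const t 1).sub ((hv t).pow 2)).div_const √2).congr_deriv ?_
  have hsqrt : √2 ^ 2 = 2 := Real.sq_sqrt zero_le_two
  field_simp
  rw [hsqrt]
  ring

theorem deriv_deriv_half_mul_deriv {v f f' : ℝ → ℝ} (hv : Differentiable ℝ v)
    (hv' : ∀ t, HasDerivAt (deriv v) (f (v t)) t) (hf : ∀ x, HasDerivAt f (f' x) x) (t : ℝ) :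
    deriv (deriv fun s => 1 / 2 * s * deriv v s) t =
      f' (v t) * (1 / 2 * t * deriv v t) + f (v t) := by
  have hψ : ∀ s, HasDerivAt (fun s => 1 / 2 * s * deriv v s)
      (1 / 2 * deriv v s + 1 / 2 * s * f (v s)) s := fun s =>
    (((hasDerivAt_id s).const_mul (1 / 2)).mul (hv' s)).congr_deriv (by simp)
  have hfv : HasDerivAt (fun s => f (v s)) (f' (v t) * deriv v t) t :=
    (hf (v t)).comp t (hv t).hasDerivAt
  rw [show deriv (fun s => 1 / 2 * s * deriv v s) = _ from funext fun s => (hψ s).deriv]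
  refine ((((hv' t).const_mul (1 / 2)).add
    (((hasDerivAt_id t).const_mul (1 / 2)).mul hfv)).congr_deriv ?_).deriv
  simp only [id]
  ring

/-- The function `ψ₁ t = (1/2) t v⋆'(t)` solves the inhomogeneous linearized
Allen–Cahn equation `ψ₁'' + (1 - 3 v⋆²) ψ₁ = v⋆''`; moreover `ψ₁` is odd, so
`∫ ψ₁ v⋆' = 0`. -/
theorem stmt_5 (v ψ₁ : ℝ → ℝ)
    (hv : v = fun t => Real.tanh (t / Real.sqrt 2))
    (hψ₁ : ψ₁ = fun t => (1 / 2) * t * deriv v t) :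
    (∀ t : ℝ, deriv (deriv ψ₁) t + (1 - 3 * (v t) ^ 2) * ψ₁ t = deriv (deriv v) t) ∧
    (∀ t : ℝ, ψ₁ (-t) = -ψ₁ t) ∧
    ∫ t : ℝ, ψ₁ t * deriv v t = 0 := by
  have hv₁ : ∀ t, HasDerivAt v ((1 - v t ^ 2) / √2) t := hv ▸ hasDerivAt_tanh_div_sqrt_two
  have hv₂ := hasDerivAt_deriv_of_hasDerivAt_eq_one_sub_sq_div_sqrt_two hv₁
  have hv_odd : v.Odd := fun t => by simp only [hv, neg_div, Real.tanh_neg]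
  have hv'_even : (deriv v).Even := fun t => by
    simp only [(hv₁ _).deriv, hv_odd.eq, neg_sq]
  have hψ₁_odd : ψ₁.Odd := fun t => by
    simp only [hψ₁, hv'_even.eq]
    ring
  refine ⟨fun t => ?_, hψ₁_odd, (hψ₁_odd.mul_even hv'_even).integral_eq_zero⟩
  have hcubic : ∀ x : ℝ, HasDerivAt (fun x => x ^ 3 - x) (3 * x ^ 2 - 1) x := fun x =>
    ((hasDerivAt_pow 3 x).sub (hasDerivAt_id x)).congr_deriv (by simp)
  rw [hψ₁, deriv_deriv_half_mul_deriv (fun t => (hv₁ t).differentiableAt) hv₂ hcubic,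
    (hv₂ t).deriv]
  ring
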